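/- For every a ∈ F one has |W_f(a)| ≤ 3·2^m; consequently the nonlinearity of f satisfies 2^(n−1) − (1/2)·max_{a ∈ F} |W_f(a)| ≥ 2^(n−1) − 3·2^(m−1). -/

import Mathlib

open Finset

/-- Absolute trace-style sum `Tr_n : F → F` for `n = 2m`. -/
def trN (m : ℕ) {F : Type*} [Field F] (x : F) : F :=
  ∑ i ∈ Finset.range (2 * m), x ^ (2 ^ i)

/-- Trace-style sum `Tr_m : F → F` (meant for elements of the subfield `K`). -/
def trM (m : ℕ) {F : Type*} [Field F] (x : F) : F :=
  ∑ i ∈ Finset.range m, x ^ (2 ^ i)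

/-- `ε(0) = 1`, `ε(t) = -1` for `t ≠ 0`. -/
def eps {F : Type*} [Field F] [DecidableEq F] (t : F) : ℤ :=
  if t = 0 then 1 else -1

/-- Kloosterman sum `k_m(μ) = ∑_{x ∈ K, x ≠ 0} χ_m(x + μ x⁻¹)`. -/
def klooM (m : ℕ) {F : Type*} [Field F] [Fintype F] [DecidableEq F] (μ : F) : ℤ :=
  ∑ x ∈ Finset.univ.filter (fun x : F => x ^ (2 ^ m) = x ∧ x ≠ 0),
    eps (trM m (x + μ * x⁻¹))

/-- Kloosterman sum over the big field: `k_n(μ) = ∑_{x ∈ F, x ≠ 0} χ_n(x + μ x⁻¹)`. -/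
def klooN (m : ℕ) {F : Type*} [Field F] [Fintype F] [DecidableEq F] (μ : F) : ℤ :=
  ∑ x ∈ Finset.univ.filter (fun x : F => x ≠ 0), eps (trN m (x + μ * x⁻¹))

/-- Walsh transform of `h : F → F` (with values in `{0,1}`) at `a`. -/
def walsh (m : ℕ) {F : Type*} [Field F] [Fintype F] [DecidableEq F] (h : F → F) (a : F) : ℤ :=
  ∑ x : F, eps (h x + trN m (a * x))

/-- The Boolean function `f_{λ,μ}(x) = Tr_n(λ x^{2^m+1}) + Tr_n(x)·Tr_n(μ x^{2^m-1})`. -/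
def fFun (m : ℕ) {F : Type*} [Field F] (l μ : F) : F → F :=
  fun x => trN m (l * x ^ (2 ^ m + 1)) + trN m x * trN m (μ * x ^ (2 ^ m - 1))

/-- The Boolean function
`g_{λ,μ}(x) = (1 + Tr_n(x))·Tr_n(λ x^{2^m+1}) + Tr_n(x)·Tr_n(μ x^{2^m-1})`. -/
def gFun (m : ℕ) {F : Type*} [Field F] (l μ : F) : F → F :=
  fun x => (1 + trN m x) * trN m (l * x ^ (2 ^ m + 1)) +
    trN m x * trN m (μ * x ^ (2 ^ m - 1))

/-!
Write `x̄ = x ^ 2 ^ m`, `K = {y | ȳ = y}` and `U = {u | u ^ (2 ^ m + 1) = 1}`. Every `x ≠ 0` factors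
uniquely as `x = u * y` with `u ∈ U` and `0 ≠ y ∈ K`. For fixed `u`, the map
`y ↦ f (u * y) + Tr_n (a * u * y)` is the linear form `y ↦ Tr_m (y * c_u)` on `K` for some
`c_u ∈ K` (`polarCoeff`): the quadratic term collapses to `Tr_m y` because `λ + λ̄ = 1`, and
`Tr_n (μ * x ^ (2 ^ m - 1))` depends only on `u`. Orthogonality of the additive characters of `K`
then gives `W_f(a) = 2 ^ m * (N - 1)`, where `N` counts the `u ∈ U` with `c_u = 0`. Each such `u`
is a root of one of two quadratics, so `N ≤ 4` and `-2 ^ m ≤ W_f(a) ≤ 3 * 2 ^ m`.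
-/

open Polynomial

section Trace

variable {F : Type*} [Field F]

theorem card_le_natDegree_of_forall_eval_eq_zero {p : F[X]} (hp : p ≠ 0) {s : Finset F}
    (h : ∀ x ∈ s, p.eval x = 0) : #s ≤ p.natDegree :=
  card_le_degree_of_subset_roots fun x hx => (mem_roots hp).mpr (h x hx)

@[simp]
theorem trM_zero (k : ℕ) : trM k (0 : F) = 0 := by
  simp [trM]

theorem exists_trM_ne_zero {k : ℕ} (hk : 0 < k) (s : Finset F) (hs : 2 ^ (k - 1) < #s) :
    ∃ y ∈ s, trM k y ≠ 0 := by
  by_contra! h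
  have hne : (∑ i ∈ range k, X ^ 2 ^ i : F[X]) ≠ 0 := fun h0 => by
    have := congrArg (coeff · 1) h0
    simp [finsetSum_coeff, coeff_X_pow, eq_comm (a := 1), hk] at this
  refine hne (eq_zero_of_natDegree_lt_card_of_eval_eq_zero' _ s (fun y hy => ?_) ?_)
  · simpa [eval_finsetSum, trM] using h y hy
  · refine lt_of_le_of_lt (natDegree_sum_le_of_forall_le _ _ fun i hi => ?_) hs
    rw [natDegree_X_pow]
    exact Nat.pow_le_pow_right two_pos (by grind)

theorem trM_sq_of_pow_eq {k : ℕ} {x : F} (hx : x ^ 2 ^ k = x) : trM k (x ^ 2) = trM k x := by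
  have h := (sum_range_succ' (fun i => x ^ 2 ^ i) k).symm.trans (sum_range_succ _ k)
  rw [pow_zero, pow_one, hx, add_left_inj] at h
  simpa only [trM, ← pow_mul, ← pow_succ'] using h

variable [CharP F 2]

theorem trM_add (k : ℕ) (x y : F) : trM k (x + y) = trM k x + trM k y := by
  simp only [trM, add_pow_char_pow, sum_add_distrib]

theorem trM_sq (k : ℕ) (x : F) : trM k x ^ 2 = trM k (x ^ 2) := by
  simp only [trM, CharTwo.sum_sq, ← pow_mul, mul_comm]

theorem trM_eq_zero_or_one {k : ℕ} {x : F} (hx : x ^ 2 ^ k = x) : trM k x = 0 ∨ trM k x = 1 :=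
  IsIdempotentElem.iff_eq_zero_or_one.mp <| by
    rw [IsIdempotentElem, ← sq, trM_sq, trM_sq_of_pow_eq hx]

theorem trN_eq_zero_or_one {m : ℕ} {x : F} (hx : x ^ 2 ^ (2 * m) = x) :
    trN m x = 0 ∨ trN m x = 1 :=
  trM_eq_zero_or_one hx

theorem trN_eq_trM_add_pow (m : ℕ) (x : F) : trN m x = trM m (x + x ^ 2 ^ m) := by
  rw [trM_add, trN, trM, trM, two_mul, sum_range_add]
  simp only [← pow_mul, ← pow_add]

theorem trN_mul_eq_trM {m : ℕ} {y : F} (hy : y ^ 2 ^ m = y) (z : F) :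
    trN m (z * y) = trM m (y * (z + z ^ 2 ^ m)) := by
  rw [trN_eq_trM_add_pow, mul_pow, hy]
  ring_nf

end Trace

section Eps

variable {F : Type*} [Field F] [DecidableEq F]

@[simp]
theorem eps_zero : eps (0 : F) = 1 := if_pos rfl

@[simp]
theorem eps_one : eps (1 : F) = -1 := if_neg one_ne_zero

theorem eps_add [CharP F 2] {s t : F} (hs : s = 0 ∨ s = 1) (ht : t = 0 ∨ t = 1) :
    eps (s + t) = eps s * eps t := by
  rcases hs with rfl | rfl <;> rcases ht with rfl | rfl <;> simp [CharTwo.add_self_eq_zero]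

end Eps

section QuadraticExtension

variable {F : Type*} [Field F] [Fintype F] {m : ℕ}

theorem pos_of_card_eq (hcard : Fintype.card F = 2 ^ (2 * m)) : 0 < m := by
  have := hcard ▸ Fintype.one_lt_card (α := F)
  grind [Nat.one_lt_two_pow_iff]

theorem charP_two_of_card_eq (hcard : Fintype.card F = 2 ^ (2 * m)) : CharP F 2 := by
  refine CharTwo.of_one_ne_zero_of_two_eq_zero one_ne_zero ?_
  have := FiniteField.cast_card_eq_zero F
  rw [hcard, Nat.cast_pow, Nat.cast_ofNat] at this
  exact pow_eq_zero_iff (by grind [pos_of_card_eq hcard]) |>.mp this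

theorem pow_two_pow_two_mul (hcard : Fintype.card F = 2 ^ (2 * m)) (x : F) :
    x ^ 2 ^ (2 * m) = x :=
  hcard ▸ FiniteField.pow_card x

theorem pow_two_pow_pow_two_pow (hcard : Fintype.card F = 2 ^ (2 * m)) (x : F) :
    (x ^ 2 ^ m) ^ 2 ^ m = x := by
  rw [← pow_mul, ← pow_add, ← two_mul, pow_two_pow_two_mul hcard]

theorem pow_two_pow_pred_mul_two (hcard : Fintype.card F = 2 ^ (2 * m)) (x : F) :
    x ^ (2 ^ (2 * m - 1) * 2) = x := by
  have hm := pos_of_card_eq hcard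
  rw [← pow_succ, Nat.sub_add_cancel (by omega), pow_two_pow_two_mul hcard]

variable [DecidableEq F]

def fixedSubfield (m : ℕ) : Finset F := {y | y ^ 2 ^ m = y}

def unitCircle (m : ℕ) : Finset F := {u | u ^ (2 ^ m + 1) = 1}

@[simp]
theorem mem_fixedSubfield {y : F} : y ∈ fixedSubfield m ↔ y ^ 2 ^ m = y := by
  simp [fixedSubfield]

@[simp]
theorem mem_unitCircle {u : F} : u ∈ unitCircle m ↔ u ^ (2 ^ m + 1) = 1 := by
  simp [unitCircle]

theorem zero_mem_fixedSubfield : (0 : F) ∈ fixedSubfield m := by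
  simp

theorem mul_mem_fixedSubfield {x y : F} (hx : x ∈ fixedSubfield m) (hy : y ∈ fixedSubfield m) :
    x * y ∈ fixedSubfield m := by
  simp_all [mul_pow]

theorem ne_zero_of_mem_unitCircle {u : F} (hu : u ∈ unitCircle m) : u ≠ 0 := by
  rintro rfl
  simp at hu

theorem norm_mem_fixedSubfield (hcard : Fintype.card F = 2 ^ (2 * m)) (x : F) :
    x ^ 2 ^ m * x ∈ fixedSubfield m := by
  rw [mem_fixedSubfield, mul_pow, pow_two_pow_pow_two_pow hcard, mul_comm]

/-- The factor `y ∈ K` of `x = u * y` is the square root of the norm `x ^ (2 ^ m + 1)`, i.e. its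
`2 ^ (2 * m - 1)`-th power. -/
theorem sum_erase_zero_eq_sum_unitCircle_sum (hcard : Fintype.card F = 2 ^ (2 * m))
    {M : Type*} [AddCommMonoid M] (g : F → M) :
    ∑ x ∈ univ.erase 0, g x = ∑ u ∈ unitCircle m, ∑ y ∈ (fixedSubfield m).erase 0, g (u * y) := by
  set r : F → F := fun x => (x ^ 2 ^ m * x) ^ 2 ^ (2 * m - 1)
  have hr_sq (x : F) : r x ^ 2 = x ^ 2 ^ m * x := by
    rw [← pow_mul, pow_two_pow_pred_mul_two hcard]
  have hr_mem (x : F) : r x ∈ fixedSubfield m := by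
    rw [mem_fixedSubfield, pow_right_comm, mem_fixedSubfield.mp (norm_mem_fixedSubfield hcard x)]
  have hr_ne {x : F} (hx : x ≠ 0) : r x ≠ 0 := fun h => by
    have := hr_sq x
    simp_all
  have hr_mul {u y : F} (hu : u ∈ unitCircle m) (hy : y ∈ fixedSubfield m) : r (u * y) = y := by
    rw [mem_unitCircle] at hu
    rw [mem_fixedSubfield] at hy
    have : (u * y) ^ 2 ^ m * (u * y) = y ^ 2 := by
      rw [mul_pow, hy]
      linear_combination y ^ 2 * hu
    simp only [r, this, ← pow_mul, mul_comm 2 (2 ^ _), pow_two_pow_pred_mul_two hcard]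
  rw [← sum_product']
  refine sum_nbij' (fun x => (x / r x, r x)) (fun p => p.1 * p.2) ?_ ?_ ?_ ?_ ?_
  · intro x hx
    have hx0 := ne_of_mem_erase hx
    simp only [mem_product, mem_erase, mem_unitCircle, ne_eq, hr_ne hx0, not_false_eq_true,
      hr_mem, and_true]
    rw [div_pow, pow_succ x, pow_succ (r x), mem_fixedSubfield.mp (hr_mem x), ← sq, hr_sq,
      div_self (mul_ne_zero (pow_ne_zero _ hx0) hx0)]
  · rintro ⟨u, y⟩ h
    simp only [mem_product, mem_erase] at h ⊢
    exact ⟨mul_ne_zero (ne_zero_of_mem_unitCircle h.1) h.2.1, mem_univ _⟩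
  · intro x hx
    exact div_mul_cancel₀ x (hr_ne (ne_of_mem_erase hx))
  · rintro ⟨u, y⟩ h
    simp only [mem_product, mem_erase] at h
    simp only [hr_mul h.1 h.2.2, Prod.mk.injEq, and_true]
    exact mul_div_cancel_right₀ u h.2.1
  · intro x hx
    simp only [div_mul_cancel₀ x (hr_ne (ne_of_mem_erase hx))]

theorem card_fixedSubfield_le (hm : m ≠ 0) : #(fixedSubfield m : Finset F) ≤ 2 ^ m := by
  rw [← FiniteField.X_pow_card_pow_sub_X_natDegree_eq F hm one_lt_two]
  refine card_le_natDegree_of_forall_eval_eq_zero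
    (FiniteField.X_pow_card_pow_sub_X_ne_zero F hm one_lt_two) fun y hy => ?_
  simp [mem_fixedSubfield.mp hy]

theorem card_unitCircle_le : #(unitCircle m : Finset F) ≤ 2 ^ m + 1 := by
  rw [← natDegree_X_pow_sub_C (n := 2 ^ m + 1) (r := (1 : F))]
  refine card_le_natDegree_of_forall_eval_eq_zero (X_pow_sub_C_ne_zero (by positivity) 1)
    fun u hu => ?_
  simp [mem_unitCircle.mp hu]

/-- Both cardinalities are forced by `#U * #K* = 2 ^ (2 * m) - 1 = (2 ^ m + 1) * (2 ^ m - 1)`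
and the root-count bounds. -/
theorem card_unitCircle_eq_and_card_fixedSubfield_eq (hcard : Fintype.card F = 2 ^ (2 * m)) :
    #(unitCircle m : Finset F) = 2 ^ m + 1 ∧ #(fixedSubfield m : Finset F) = 2 ^ m := by
  have hm := pos_of_card_eq hcard
  have hprod := sum_erase_zero_eq_sum_unitCircle_sum hcard (fun _ => 1)
  simp only [sum_const, smul_eq_mul, mul_one, card_erase_of_mem (mem_univ _), card_univ, hcard,
    card_erase_of_mem zero_mem_fixedSubfield] at hprod
  have hK := card_fixedSubfield_le (F := F) hm.ne'
  have hsq : 2 ^ (2 * m) - 1 = (2 ^ m + 1) * (2 ^ m - 1) := by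
    zify [Nat.one_le_two_pow (n := m), Nat.one_le_two_pow (n := 2 * m)]
    ring
  have hU0 : 0 < #(unitCircle m : Finset F) := card_pos.mpr ⟨1, by simp⟩
  have hK0 : 0 < #(fixedSubfield m : Finset F) := card_pos.mpr ⟨0, zero_mem_fixedSubfield⟩
  have := (mul_eq_mul_iff_eq_and_eq_of_pos card_unitCircle_le (Nat.sub_le_sub_right hK 1) hU0
    (Nat.sub_pos_of_lt (Nat.one_lt_two_pow hm.ne'))).mp (hprod.symm.trans hsq)
  omega

theorem card_unitCircle (hcard : Fintype.card F = 2 ^ (2 * m)) :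
    #(unitCircle m : Finset F) = 2 ^ m + 1 :=
  (card_unitCircle_eq_and_card_fixedSubfield_eq hcard).1

theorem card_fixedSubfield (hcard : Fintype.card F = 2 ^ (2 * m)) :
    #(fixedSubfield m : Finset F) = 2 ^ m :=
  (card_unitCircle_eq_and_card_fixedSubfield_eq hcard).2

variable [CharP F 2]

theorem add_mem_fixedSubfield {x y : F} (hx : x ∈ fixedSubfield m) (hy : y ∈ fixedSubfield m) :
    x + y ∈ fixedSubfield m := by
  simp_all [add_pow_char_pow]

theorem add_pow_mem_fixedSubfield (hcard : Fintype.card F = 2 ^ (2 * m)) (x : F) :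
    x + x ^ 2 ^ m ∈ fixedSubfield m := by
  rw [mem_fixedSubfield, add_pow_char_pow, pow_two_pow_pow_two_pow hcard, add_comm]

theorem exists_mem_fixedSubfield_trM_eq_one (hcard : Fintype.card F = 2 ^ (2 * m)) :
    ∃ y ∈ (fixedSubfield m : Finset F), trM m y = 1 := by
  have hm := pos_of_card_eq hcard
  obtain ⟨y, hy, h⟩ := exists_trM_ne_zero hm (fixedSubfield m) <| by
    rw [card_fixedSubfield hcard]
    exact Nat.pow_lt_pow_right one_lt_two (by omega)
  exact ⟨y, hy, (trM_eq_zero_or_one (mem_fixedSubfield.mp hy)).resolve_left h⟩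

/-- For `b ≠ 0`, translating `y` by `c / b` with `trM m c = 1` flips the sign of every term. -/
theorem sum_fixedSubfield_eps_trM_mul (hcard : Fintype.card F = 2 ^ (2 * m)) {b : F}
    (hb : b ∈ fixedSubfield m) :
    ∑ y ∈ fixedSubfield m, eps (trM m (y * b)) = if b = 0 then 2 ^ m else 0 := by
  split_ifs with hb0
  · simp [hb0, card_fixedSubfield hcard]
  obtain ⟨c, hc, htr⟩ := exists_mem_fixedSubfield_trM_eq_one hcard
  have hcb : c / b ∈ fixedSubfield m := by simp_all [div_pow]
  have hflip : ∑ y ∈ fixedSubfield m, eps (trM m (y * b)) =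
      -∑ y ∈ fixedSubfield m, eps (trM m (y * b)) := by
    rw [← sum_neg_distrib]
    refine sum_equiv (Equiv.addRight (c / b)) (fun y => ?_) (fun y hy => ?_)
    · refine ⟨fun hy => add_mem_fixedSubfield hy hcb, fun hy => ?_⟩
      simpa [CharTwo.add_cancel_right] using add_mem_fixedSubfield hy hcb
    · have hyb := trM_eq_zero_or_one (mem_fixedSubfield.mp (mul_mem_fixedSubfield hy hb))
      rw [Equiv.coe_addRight, add_mul, div_mul_cancel₀ _ hb0, trM_add, htr,
        eps_add hyb (Or.inr rfl), eps_one]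
      ring
  omega

end QuadraticExtension

section Walsh

variable {F : Type*} [Field F]

def polarCoeff (m : ℕ) (μ a u : F) : F :=
  1 + (u + u ^ 2 ^ m) * trN m (μ * u ^ (2 ^ m - 1)) + (a * u + (a * u) ^ 2 ^ m)

variable [Fintype F] [DecidableEq F] [CharP F 2] {m : ℕ}

theorem polarCoeff_mem_fixedSubfield (hcard : Fintype.card F = 2 ^ (2 * m)) (μ a u : F) :
    polarCoeff m μ a u ∈ fixedSubfield m := by
  have hδ : trN m (μ * u ^ (2 ^ m - 1)) ∈ fixedSubfield m := by
    rcases trN_eq_zero_or_one (pow_two_pow_two_mul hcard (μ * u ^ (2 ^ m - 1))) with h | h <;>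
      simp [h]
  exact add_mem_fixedSubfield (add_mem_fixedSubfield (by simp)
    (mul_mem_fixedSubfield (add_pow_mem_fixedSubfield hcard u) hδ))
    (add_pow_mem_fixedSubfield hcard (a * u))

theorem fFun_add_trN_mul_eq (hcard : Fintype.card F = 2 ^ (2 * m)) {l : F}
    (hl : l + l ^ 2 ^ m = 1) (μ a : F) {u y : F} (hu : u ∈ unitCircle m)
    (hy : y ∈ fixedSubfield m) :
    fFun m l μ (u * y) + trN m (a * (u * y)) = trM m (y * polarCoeff m μ a u) := by
  rw [mem_unitCircle] at hu
  rw [mem_fixedSubfield] at hy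
  have hquad : trN m (l * (u * y) ^ (2 ^ m + 1)) = trM m y := by
    have hnorm : (u * y) ^ (2 ^ m + 1) = y ^ 2 := by
      rw [mul_pow, pow_succ y, hy, hu, one_mul, sq]
    have hy2 : (y ^ 2) ^ 2 ^ m = y ^ 2 := by rw [pow_right_comm, hy]
    rw [hnorm, trN_mul_eq_trM hy2, hl, mul_one, trM_sq_of_pow_eq hy]
  have hprod : trN m (u * y) * trN m (μ * (u * y) ^ (2 ^ m - 1)) =
      trM m (y * ((u + u ^ 2 ^ m) * trN m (μ * u ^ (2 ^ m - 1)))) := by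
    rcases eq_or_ne y 0 with rfl | hy0
    · simp [trN_eq_trM_add_pow]
    have hy1 : y ^ (2 ^ m - 1) = 1 := by
      rwa [← Nat.sub_add_cancel Nat.one_le_two_pow, pow_succ, mul_eq_right₀ hy0] at hy
    rw [mul_pow, hy1, mul_one, trN_mul_eq_trM hy]
    rcases trN_eq_zero_or_one (pow_two_pow_two_mul hcard (μ * u ^ (2 ^ m - 1))) with h | h <;>
      simp [h]
  have hlin : trN m (a * (u * y)) = trM m (y * (a * u + (a * u) ^ 2 ^ m)) := by
    rw [← mul_assoc, trN_mul_eq_trM hy]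
  simp only [fFun, polarCoeff]
  rw [hquad, hprod, hlin, ← trM_add, ← trM_add]
  ring_nf

theorem walsh_fFun_eq (hcard : Fintype.card F = 2 ^ (2 * m)) {l : F} (hl : l + l ^ 2 ^ m = 1)
    (μ a : F) :
    walsh m (fFun m l μ) a =
      2 ^ m * #{u ∈ unitCircle m | polarCoeff m μ a u = 0} - 2 ^ m := by
  set G : F → ℤ := fun x => eps (fFun m l μ x + trN m (a * x))
  have hG0 : G 0 = 1 := by simp [G, fFun, trN_eq_trM_add_pow]
  have hfiber (u : F) (hu : u ∈ unitCircle m) :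
      1 + ∑ y ∈ (fixedSubfield m).erase 0, G (u * y) =
        if polarCoeff m μ a u = 0 then 2 ^ m else 0 := by
    rw [← sum_fixedSubfield_eps_trM_mul hcard (polarCoeff_mem_fixedSubfield hcard μ a u),
      ← add_sum_erase _ _ zero_mem_fixedSubfield, zero_mul, trM_zero, eps_zero]
    refine congrArg _ (sum_congr rfl fun y hy => ?_)
    rw [← fFun_add_trN_mul_eq hcard hl μ a hu (mem_of_mem_erase hy)]
  calc walsh m (fFun m l μ) a = G 0 + ∑ x ∈ univ.erase 0, G x :=
        (add_sum_erase _ _ (mem_univ 0)).symm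
    _ = 1 + ∑ u ∈ unitCircle m, ∑ y ∈ (fixedSubfield m).erase 0, G (u * y) := by
        rw [hG0, sum_erase_zero_eq_sum_unitCircle_sum hcard]
    _ = 1 + ∑ u ∈ unitCircle m, ((if polarCoeff m μ a u = 0 then 2 ^ m else 0) - 1) := by
        refine congrArg _ (sum_congr rfl fun u hu => ?_)
        rw [← hfiber u hu]
        ring
    _ = _ := by
        simp [sum_sub_distrib, ← sum_filter, card_unitCircle hcard]
        ring

theorem card_filter_polarCoeff_eq_zero_le (hcard : Fintype.card F = 2 ^ (2 * m)) (μ a : F) :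
    #{u ∈ unitCircle m | polarCoeff m μ a u = 0} ≤ 4 := by
  have hne (b c : F) : C b * X ^ 2 + X + C c ≠ 0 := fun h => by
    simpa using congrArg (coeff · 1) h
  have hdeg (b c : F) : (C b * X ^ 2 + X + C c).natDegree ≤ 2 := by
    simpa using natDegree_quadratic_le (a := b) (b := 1) (c := c)
  refine (card_le_natDegree_of_forall_eval_eq_zero (mul_ne_zero (hne a (a ^ 2 ^ m))
    (hne (a + 1) (a ^ 2 ^ m + 1))) fun u hu => ?_).trans
    (natDegree_mul_le.trans (add_le_add (hdeg _ _) (hdeg _ _)))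
  obtain ⟨hu, he⟩ := mem_filter.mp hu
  have hu0 := ne_zero_of_mem_unitCircle hu
  have hubar : u ^ 2 ^ m = u⁻¹ :=
    eq_inv_of_mul_eq_one_left (by rw [← pow_succ, mem_unitCircle.mp hu])
  have hue : u * polarCoeff m μ a u = 0 := by rw [he, mul_zero]
  rw [polarCoeff, mul_pow, hubar] at hue
  simp only [eval_mul, eval_add, eval_C, eval_X, eval_pow, mul_eq_zero]
  rcases trN_eq_zero_or_one (pow_two_pow_two_mul hcard (μ * u ^ (2 ^ m - 1))) with h | h <;>
    rw [h] at hue <;> field_simp at hue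
  · exact .inl (by linear_combination hue)
  · exact .inr (by linear_combination hue)

theorem abs_walsh_fFun_le (hcard : Fintype.card F = 2 ^ (2 * m)) {l : F}
    (hl : l + l ^ 2 ^ m = 1) (μ a : F) : |walsh m (fFun m l μ) a| ≤ 3 * 2 ^ m := by
  have hN : (#{u ∈ unitCircle m | polarCoeff m μ a u = 0} : ℤ) ≤ 4 := by
    exact_mod_cast card_filter_polarCoeff_eq_zero_le hcard μ a
  rw [walsh_fFun_eq hcard hl, abs_le]
  constructor <;> nlinarith [pow_pos (two_pos : (0 : ℤ) < 2) m]

end Walsh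

theorem stmt9_general (m : ℕ) (F : Type*) [Field F] [Fintype F] [DecidableEq F]
    (hcard : Fintype.card F = 2 ^ (2 * m))
    (l : F) (hl : l + l ^ (2 ^ m) = 1)
    (μ : F) :
    (∀ a : F, |walsh m (fFun m l μ) a| ≤ 3 * 2 ^ m) ∧
    ((2 : ℚ) ^ (2 * m - 1) - (1 / 2) *
        ((Finset.univ.sup' ⟨(0 : F), Finset.mem_univ 0⟩
          (fun a : F => |walsh m (fFun m l μ) a|) : ℤ) : ℚ) ≥
      (2 : ℚ) ^ (2 * m - 1) - 3 * 2 ^ (m - 1)) := by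
  have := charP_two_of_card_eq hcard
  have hbound (a : F) := abs_walsh_fFun_le hcard hl μ a
  refine ⟨hbound, ?_⟩
  have hmax : ((univ.sup' ⟨(0 : F), mem_univ 0⟩ fun a => |walsh m (fFun m l μ) a| : ℤ) : ℚ) ≤
      3 * 2 ^ m := by
    exact_mod_cast sup'_le _ _ fun a _ => hbound a
  have hpow : (2 : ℚ) ^ m = 2 * 2 ^ (m - 1) := by
    rw [← pow_succ', Nat.sub_add_cancel (pos_of_card_eq hcard)]
  linarith

theorem stmt9 (m : ℕ) (hm : 0 < m) (F : Type*) [Field F] [Fintype F] [DecidableEq F]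
    (hcard : Fintype.card F = 2 ^ (2 * m))
    (l : F) (hl : l + l ^ (2 ^ m) = 1)
    (μ : F) (hμK : μ ^ (2 ^ m) = μ) (hμ0 : μ ≠ 0) :
    (∀ a : F, |walsh m (fFun m l μ) a| ≤ 3 * 2 ^ m) ∧
    ((2 : ℚ) ^ (2 * m - 1) - (1 / 2) *
        ((Finset.univ.sup' ⟨(0 : F), Finset.mem_univ 0⟩
          (fun a : F => |walsh m (fFun m l μ) a|) : ℤ) : ℚ) ≥
      (2 : ℚ) ^ (2 * m - 1) - 3 * 2 ^ (m - 1)) :=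
  stmt9_general m F hcard l hl μ
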